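/- arXiv:2604.08577 — 4 statements merged into one kernel-verified Lean document; each statement's English description precedes it below -/
import Mathlib

section
/- Fix an integer n ≥ 1, a vector of real losses L_1, …, L_n, and a radius ρ with 0 ≤ ρ ≤ log n. Then the KL-robust value R_KL(ρ) := sup { ∑_{i=1}^n q_i L_i : q is a probability vector on {1,…,n} with D_KL(q ‖ P) ≤ ρ }, where P is the uniform distribution on {1,…,n}, admits the exact one-dimensional dual representation R_KL(ρ) = inf_{η > 0} { Ψ_η + ρ/η }, where Ψ_η := (1/η) · log( (1/n) ∑_{i=1}^n exp(η L_i) ). -/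
namespace KLDualAux
open Finset Filter

variable {n : ℕ} (L : Fin n → ℝ)

noncomputable def Z (η : ℝ) : ℝ := ∑ i, Real.exp (η * L i)
noncomputable def g (η : ℝ) (i : Fin n) : ℝ := Real.exp (η * L i) / Z L η
noncomputable def KLf (η : ℝ) : ℝ := ∑ i, g L η i * Real.log (g L η i / (1/(n:ℝ)))
noncomputable def muf (η : ℝ) : ℝ := ∑ i, g L η i * L i

variable (hn : 1 ≤ n)
include hn

lemma Zpos (η : ℝ) : 0 < Z L η := by
  haveI : Nonempty (Fin n) := Fin.pos_iff_nonempty.mp hn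
  exact Finset.sum_pos (fun i _ => Real.exp_pos _) Finset.univ_nonempty

lemma gpos (η : ℝ) (i : Fin n) : 0 < g L η i :=
  div_pos (Real.exp_pos _) (Zpos L hn η)

lemma gsum (η : ℝ) : ∑ i, g L η i = 1 := by
  simp only [g, ← Finset.sum_div]
  exact div_self (Zpos L hn η).ne'

omit hn in
lemma Zzero : Z L 0 = n := by
  simp [Z]

lemma KLf_zero : KLf L 0 = 0 := by
  have h : ∀ i : Fin n, g L 0 i = 1/(n:ℝ) := by
    intro i
    simp [g, Zzero L]
  have hn0 : (0:ℝ) < n := by exact_mod_cast hn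
  simp [KLf, h, div_self hn0.ne']
  exact Or.inr (Or.inl (inv_mul_cancel₀ hn0.ne'))

lemma KLf_eq (η : ℝ) :
    KLf L η = η * muf L η - Real.log (Z L η) + Real.log n := by
  have hZ := Zpos L hn η
  have hn0 : (0:ℝ) < n := by exact_mod_cast hn
  have e : ∀ i : Fin n, Real.log (g L η i / (1/(n:ℝ)))
      = η * L i - Real.log (Z L η) + Real.log n := by
    intro i
    rw [Real.log_div (gpos L hn η i).ne' (by positivity), g,
      Real.log_div (Real.exp_ne_zero _) hZ.ne', Real.log_exp,
      Real.log_div one_ne_zero hn0.ne', Real.log_one]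
    ring
  have h : ∀ i : Fin n, g L η i * Real.log (g L η i / (1/(n:ℝ)))
      = η * (g L η i * L i) - g L η i * Real.log (Z L η) + g L η i * Real.log n := by
    intro i; rw [e i]; ring
  rw [KLf, Finset.sum_congr rfl (fun i _ => h i), Finset.sum_add_distrib,
    Finset.sum_sub_distrib, ← Finset.mul_sum, ← Finset.sum_mul, ← Finset.sum_mul,
    gsum L hn, muf, one_mul, one_mul]

lemma KLf_cont : Continuous (KLf L) := by
  apply continuous_finset_sum
  intro i _
  have hg : Continuous (fun η => g L η i) := by
    apply Continuous.div
    · exact Real.continuous_exp.comp (continuous_id.mul continuous_const)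
    · apply continuous_finset_sum
      intro j _
      exact Real.continuous_exp.comp (continuous_id.mul continuous_const)
    · intro η
      exact (Zpos L hn η).ne'
  exact hg.mul ((hg.div_const _).log (fun η => by
    have := gpos L hn η i
    positivity))

lemma KLf_nonneg (η : ℝ) : 0 ≤ KLf L η := by
  have hn0 : (0:ℝ) < n := by exact_mod_cast hn
  have key : ∀ i : Fin n, -(g L η i * Real.log (g L η i / (1/(n:ℝ)))) ≤ 1/(n:ℝ) - g L η i := by
    intro i
    have hg := gpos L hn η i
    have hlog : Real.log ((1/(n:ℝ)) / g L η i) ≤ (1/(n:ℝ)) / g L η i - 1 :=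
      Real.log_le_sub_one_of_pos (by positivity)
    have e : -(g L η i * Real.log (g L η i / (1/(n:ℝ)))) = g L η i * Real.log ((1/(n:ℝ)) / g L η i) := by
      rw [Real.log_div hg.ne' (by positivity), Real.log_div (by positivity) hg.ne']
      ring
    rw [e]
    calc g L η i * Real.log ((1/(n:ℝ)) / g L η i)
        ≤ g L η i * ((1/(n:ℝ)) / g L η i - 1) := mul_le_mul_of_nonneg_left hlog hg.le
      _ = 1/(n:ℝ) - g L η i := by field_simp
  have hsum := Finset.sum_le_sum (s := Finset.univ) (fun i _ => key i)
  rw [Finset.sum_neg_distrib, Finset.sum_sub_distrib, gsum L hn] at hsum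
  simp only [Finset.sum_const, Finset.card_univ, Fintype.card_fin, nsmul_eq_mul] at hsum
  have h1 : (n:ℝ) * (1/(n:ℝ)) = 1 := by field_simp
  rw [KLf]
  nlinarith [hsum]

/-- the key duality identity at the tilted distribution -/
lemma muf_eq (η : ℝ) (hη : η ≠ 0) :
    muf L η = (1/η) * Real.log ((1/(n:ℝ)) * Z L η) + KLf L η / η := by
  have hZ := Zpos L hn η
  have hn0 : (0:ℝ) < n := by exact_mod_cast hn
  rw [KLf_eq L hn, Real.log_mul (by positivity) hZ.ne',
    Real.log_div one_ne_zero hn0.ne', Real.log_one]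
  field_simp
  ring

/-- Gibbs / Donsker–Varadhan inequality (finite form). -/
lemma gibbs (q : Fin n → ℝ)
    (hq0 : ∀ i, 0 ≤ q i) (hq1 : ∑ i, q i = 1) (η : ℝ) :
    η * ∑ i, q i * L i ≤ Real.log ((1/(n:ℝ)) * ∑ i, Real.exp (η * L i)) +
      ∑ i, q i * Real.log (q i / (1/(n:ℝ))) := by
  haveI : Nonempty (Fin n) := Fin.pos_iff_nonempty.mp hn
  set Zv : ℝ := ∑ i, Real.exp (η * L i) with hZdef
  have hZ : 0 < Zv := Finset.sum_pos (fun i _ => Real.exp_pos _) Finset.univ_nonempty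
  have hn0 : (0:ℝ) < n := by exact_mod_cast hn
  set C : ℝ := Real.log ((1/(n:ℝ)) * Zv) with hCdef
  have hC : C = Real.log Zv - Real.log n := by
    rw [hCdef, Real.log_mul (by positivity) hZ.ne', Real.log_div one_ne_zero hn0.ne',
      Real.log_one]
    ring
  have key : ∀ i : Fin n, q i * (η * L i) - q i * C ≤
      q i * Real.log (q i / (1/(n:ℝ))) + (Real.exp (η * L i) / Zv - q i) := by
    intro i
    rcases eq_or_lt_of_le (hq0 i) with h0 | hpos
    · rw [← h0]
      simp
      positivity
    · have hr : 0 < Real.exp (η * L i) / Zv := by positivity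
      have hlog : Real.log (Real.exp (η * L i) / Zv / q i) ≤
          Real.exp (η * L i) / Zv / q i - 1 :=
        Real.log_le_sub_one_of_pos (div_pos hr hpos)
      have e1 : q i * (η * L i) - q i * C - q i * Real.log (q i / (1/(n:ℝ)))
          = q i * Real.log (Real.exp (η * L i) / Zv / q i) := by
        rw [Real.log_div hr.ne' hpos.ne', Real.log_div (Real.exp_ne_zero _) hZ.ne',
          Real.log_exp, Real.log_div hpos.ne' (by positivity),
          Real.log_div one_ne_zero hn0.ne', Real.log_one, hC]
        ring
      have e2 : q i * Real.log (Real.exp (η * L i) / Zv / q i) ≤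
          Real.exp (η * L i) / Zv - q i := by
        calc q i * Real.log (Real.exp (η * L i) / Zv / q i)
            ≤ q i * (Real.exp (η * L i) / Zv / q i - 1) :=
              mul_le_mul_of_nonneg_left hlog hpos.le
          _ = Real.exp (η * L i) / Zv - q i := by
              field_simp
      linarith [e1, e2]
  have hsum := Finset.sum_le_sum (s := Finset.univ) (fun i _ => key i)
  have lhs_eq : ∑ i, (q i * (η * L i) - q i * C) = η * (∑ i, q i * L i) - C := by
    rw [Finset.sum_sub_distrib, ← Finset.sum_mul, hq1, one_mul]
    congr 1
    rw [Finset.mul_sum]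
    exact Finset.sum_congr rfl (fun i _ => by ring)
  have rhs_eq : ∑ i, (q i * Real.log (q i / (1/(n:ℝ))) + (Real.exp (η * L i) / Zv - q i))
      = ∑ i, q i * Real.log (q i / (1/(n:ℝ))) := by
    rw [Finset.sum_add_distrib, Finset.sum_sub_distrib, ← Finset.sum_div, ← hZdef,
      div_self hZ.ne', hq1]
    ring
  rw [lhs_eq, rhs_eq] at hsum
  linarith

/-- the limit of `Ψ_η` as `η → 0⁺` is the mean (upper estimate form). -/
lemma psi_lt (ε : ℝ) (hε : 0 < ε) :
    ∃ η : ℝ, 0 < η ∧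
      (1/η) * Real.log ((1/(n:ℝ)) * ∑ i, Real.exp (η * L i)) < (∑ i, (1/(n:ℝ)) * L i) + ε := by
  have hn0 : (0:ℝ) < n := by exact_mod_cast hn
  set A : ℝ → ℝ := fun η => (1/(n:ℝ)) * ∑ i, Real.exp (η * L i) with hA
  have hA0 : A 0 = 1 := by simp [hA, div_mul_eq_mul_div, mul_comm]; field_simp
  have hdA : HasDerivAt A ((1/(n:ℝ)) * ∑ i, L i) 0 := by
    have h1 : ∀ i : Fin n, HasDerivAt (fun η : ℝ => Real.exp (η * L i)) (L i) 0 := by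
      intro i
      have := (hasDerivAt_mul_const (L i) (x := (0:ℝ))).exp
      simpa using this
    have h2 : HasDerivAt (fun η : ℝ => ∑ i, Real.exp (η * L i)) (∑ i, L i) 0 :=
      HasDerivAt.fun_sum (fun i _ => h1 i)
    exact h2.const_mul _
  have hdlog : HasDerivAt (fun η => Real.log (A η)) ((1/(n:ℝ)) * ∑ i, L i) 0 := by
    have := hdA.log (by rw [hA0]; norm_num)
    simpa [hA0] using this
  have hmean : (1/(n:ℝ)) * ∑ i, L i = ∑ i, (1/(n:ℝ)) * L i := by
    rw [Finset.mul_sum]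
  have hslope := hasDerivAt_iff_tendsto_slope.mp hdlog
  have hmono : (nhdsWithin (0:ℝ) (Set.Ioi 0)) ≤ nhdsWithin (0:ℝ) {(0:ℝ)}ᶜ :=
    nhdsWithin_mono 0 (fun x hx => ne_of_gt hx)
  have h1 : Tendsto (slope (fun η => Real.log (A η)) 0) (nhdsWithin (0:ℝ) (Set.Ioi 0))
      (nhds ((1/(n:ℝ)) * ∑ i, L i)) := hslope.mono_left hmono
  have heq : ∀ᶠ η in nhdsWithin (0:ℝ) (Set.Ioi 0),
      slope (fun η => Real.log (A η)) 0 η = (1/η) * Real.log (A η) := by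
    filter_upwards [eventually_mem_nhdsWithin] with η hη
    rw [slope_def_field, hA0, Real.log_one]
    field_simp
    ring
  have h2 : Tendsto (fun η => (1/η) * Real.log (A η)) (nhdsWithin (0:ℝ) (Set.Ioi 0))
      (nhds ((1/(n:ℝ)) * ∑ i, L i)) := h1.congr' heq
  have h3 : ∀ᶠ η in nhdsWithin (0:ℝ) (Set.Ioi 0),
      (1/η) * Real.log (A η) < (∑ i, (1/(n:ℝ)) * L i) + ε := by
    apply h2.eventually_lt_const
    rw [hmean]
    linarith
  obtain ⟨η, hη1, hη2⟩ := (h3.and eventually_mem_nhdsWithin).exists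
  exact ⟨η, hη2, hη1⟩

end KLDualAux

/-- KL-robust value admits the exact one-dimensional dual
representation `R_KL(ρ) = inf_{η>0} { Ψ_η + ρ/η }`. -/
theorem kl_drto_exact_dual (n : ℕ) (hn : 1 ≤ n) (L : Fin n → ℝ) (ρ : ℝ)
    (hρ0 : 0 ≤ ρ) (hρ1 : ρ ≤ Real.log n) :
    sSup {v : ℝ | ∃ q : Fin n → ℝ, (∀ i, 0 ≤ q i) ∧ (∑ i, q i) = 1 ∧
        (∑ i, q i * Real.log (q i / (1 / (n : ℝ)))) ≤ ρ ∧
        v = ∑ i, q i * L i} =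
    sInf {v : ℝ | ∃ η : ℝ, 0 < η ∧
        v = (1 / η) * Real.log ((1 / (n : ℝ)) * ∑ i, Real.exp (η * L i)) + ρ / η} := by
  classical
  open KLDualAux in
  haveI : Nonempty (Fin n) := Fin.pos_iff_nonempty.mp hn
  have hn0 : (0:ℝ) < n := by exact_mod_cast hn
  set S := {v : ℝ | ∃ q : Fin n → ℝ, (∀ i, 0 ≤ q i) ∧ (∑ i, q i) = 1 ∧
      (∑ i, q i * Real.log (q i / (1 / (n : ℝ)))) ≤ ρ ∧
      v = ∑ i, q i * L i} with hSdef
  set D := {v : ℝ | ∃ η : ℝ, 0 < η ∧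
      v = (1 / η) * Real.log ((1 / (n : ℝ)) * ∑ i, Real.exp (η * L i)) + ρ / η} with hDdef
  -- the uniform distribution gives a primal feasible point
  have hmean_mem : (∑ i, (1/(n:ℝ)) * L i) ∈ S := by
    refine ⟨fun _ => 1/(n:ℝ), fun i => by positivity, ?_, ?_, rfl⟩
    · simp [Finset.sum_const, Finset.card_univ]
      field_simp
    · simp only [div_self (ne_of_gt (by positivity : (0:ℝ) < 1/(n:ℝ))), Real.log_one,
        mul_zero, Finset.sum_const_zero]
      exact hρ0
  -- dual elements
  have hD_mem : ∀ η : ℝ, 0 < η →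
      ((1 / η) * Real.log ((1 / (n : ℝ)) * ∑ i, Real.exp (η * L i)) + ρ / η) ∈ D :=
    fun η hη => ⟨η, hη, rfl⟩
  -- weak duality
  have weak : ∀ s ∈ S, ∀ d ∈ D, s ≤ d := by
    rintro s ⟨q, hq0, hq1, hqKL, rfl⟩ d ⟨η, hη, rfl⟩
    have hg := KLDualAux.gibbs L hn q hq0 hq1 η
    have h1 : η * ∑ i, q i * L i ≤
        Real.log ((1/(n:ℝ)) * ∑ i, Real.exp (η * L i)) + ρ := by linarith
    have h2 : ∑ i, q i * L i ≤
        (Real.log ((1/(n:ℝ)) * ∑ i, Real.exp (η * L i)) + ρ) / η := by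
      rw [le_div_iff₀ hη]
      linarith
    have h3 : (Real.log ((1/(n:ℝ)) * ∑ i, Real.exp (η * L i)) + ρ) / η
        = (1 / η) * Real.log ((1 / (n : ℝ)) * ∑ i, Real.exp (η * L i)) + ρ / η := by
      ring
    linarith [h2, h3.le, h3.ge]
  have hSne : S.Nonempty := ⟨_, hmean_mem⟩
  have hDne : D.Nonempty := ⟨_, hD_mem 1 one_pos⟩
  have hSbdd : BddAbove S := ⟨_, fun s hs => weak s hs _ (hD_mem 1 one_pos)⟩
  have hDbdd : BddBelow D := ⟨_, fun d hd => weak _ hmean_mem d hd⟩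
  have hle : sSup S ≤ sInf D :=
    csSup_le hSne (fun s hs => le_csInf hDne (fun d hd => weak s hs d hd))
  refine le_antisymm hle (le_of_forall_pos_le_add ?_)
  intro ε hε
  by_cases hρz : ρ = 0
  · -- ρ = 0 : the dual value tends to the mean as η → 0⁺
    obtain ⟨η, hη, hψ⟩ := KLDualAux.psi_lt L hn ε hε
    have hd := hD_mem η hη
    have h1 : sInf D ≤ (1 / η) * Real.log ((1 / (n : ℝ)) * ∑ i, Real.exp (η * L i)) + ρ / η :=
      csInf_le hDbdd hd
    have h2 : (∑ i, (1/(n:ℝ)) * L i) ≤ sSup S := le_csSup hSbdd hmean_mem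
    rw [hρz, zero_div] at h1
    linarith
  · have hρpos : 0 < ρ := lt_of_le_of_ne hρ0 (Ne.symm hρz)
    by_cases hcase : ∃ η₀ : ℝ, 0 < η₀ ∧ ρ ≤ KLf L η₀
    · -- exact attainment via the intermediate value theorem
      obtain ⟨η₀, hη₀, hη₀le⟩ := hcase
      have hIVT := intermediate_value_Icc hη₀.le (KLf_cont L hn).continuousOn
      have hρmem : ρ ∈ Set.Icc (KLf L 0) (KLf L η₀) := by
        rw [KLf_zero L hn]
        exact ⟨hρ0, hη₀le⟩
      obtain ⟨η, hηmem, hfη⟩ := hIVT hρmem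
      have hηpos : 0 < η := by
        rcases eq_or_lt_of_le hηmem.1 with h | h
        · exfalso
          rw [← h, KLf_zero L hn] at hfη
          exact hρz hfη.symm
        · exact h
      -- the tilted distribution is primal feasible with value = dual value at η
      have hs_mem : muf L η ∈ S := by
        refine ⟨g L η, fun i => (gpos L hn η i).le, gsum L hn η, ?_, rfl⟩
        rw [show (∑ i, g L η i * Real.log (g L η i / (1 / (n:ℝ)))) = KLf L η from rfl, hfη]
      have hident : muf L η
          = (1 / η) * Real.log ((1 / (n : ℝ)) * ∑ i, Real.exp (η * L i)) + ρ / η := by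
        rw [muf_eq L hn η hηpos.ne', hfη]
        rfl
      have h1 : sInf D ≤ muf L η := by
        rw [hident]
        exact csInf_le hDbdd (hD_mem η hηpos)
      have h2 : muf L η ≤ sSup S := le_csSup hSbdd hs_mem
      linarith
    · -- KLf < ρ everywhere : take η large, the gap (ρ - KLf η)/η ≤ ρ/η = ε
        push_neg at hcase
        set η : ℝ := ρ / ε with hηdef
        have hηpos : 0 < η := div_pos hρpos hε
        have hKL : KLf L η < ρ := hcase η hηpos
        have hs_mem : muf L η ∈ S := by
          refine ⟨g L η, fun i => (gpos L hn η i).le, gsum L hn η, ?_, rfl⟩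
          rw [show (∑ i, g L η i * Real.log (g L η i / (1 / (n:ℝ)))) = KLf L η from rfl]
          exact hKL.le
        have hident : muf L η
            = (1 / η) * Real.log ((1 / (n : ℝ)) * ∑ i, Real.exp (η * L i)) + KLf L η / η := by
          rw [muf_eq L hn η hηpos.ne']
          rfl
        have h1 : sInf D ≤ (1 / η) * Real.log ((1 / (n : ℝ)) * ∑ i, Real.exp (η * L i)) + ρ / η :=
          csInf_le hDbdd (hD_mem η hηpos)
        have h2 : muf L η ≤ sSup S := le_csSup hSbdd hs_mem
        have h3 : ρ / η = ε := by
          rw [hηdef]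
          field_simp
        have h4 : 0 ≤ KLf L η / η := div_nonneg (KLf_nonneg L hn η) hηpos.le
        linarith
end

section
/- Fix an integer n ≥ 1, real losses L_1, …, L_n, and a radius ρ with 0 ≤ ρ ≤ log n. Suppose the infimum inf_{η > 0} { Ψ_η + ρ/η }, where Ψ_η := (1/η) · log( (1/n) ∑_{i=1}^n exp(η L_i) ), is attained at some finite η* ∈ (0, ∞). Define the softmax weights Q*(i) := exp(η* L_i) / ∑_{j=1}^n exp(η* L_j). Then Q* lies in the KL ball { q : D_KL(q ‖ P) ≤ ρ } around the uniform distribution P, attains the supremum defining R_KL(ρ) := sup { ∑_i q_i L_i : D_KL(q ‖ P) ≤ ρ }, and R_KL(ρ) = ∑_{i=1}^n Q*(i) · L_i. -/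
/-- if the dual infimum `inf_{η>0}{Ψ_η + ρ/η}` is attained at a
finite `η* > 0`, then the softmax weights `Q*` are a probability vector lying in
the KL ball of radius `ρ` around the uniform distribution, attain the supremum
defining the KL-robust value, and `R_KL(ρ) = ∑ i, Q*(i) L i`. -/
theorem kl_drto_optimal_reweighting (n : ℕ) (hn : 1 ≤ n) (L : Fin n → ℝ) (ρ : ℝ)
    (hρ0 : 0 ≤ ρ) (hρ1 : ρ ≤ Real.log n) (ηstar : ℝ) (hηstar : 0 < ηstar)
    (hmin : ∀ η : ℝ, 0 < η →
      (1 / ηstar) * Real.log ((1 / (n : ℝ)) * ∑ i, Real.exp (ηstar * L i)) + ρ / ηstar ≤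
      (1 / η) * Real.log ((1 / (n : ℝ)) * ∑ i, Real.exp (η * L i)) + ρ / η)
    (Q : Fin n → ℝ)
    (hQ : ∀ i, Q i = Real.exp (ηstar * L i) / ∑ j, Real.exp (ηstar * L j)) :
    (∀ i, 0 ≤ Q i) ∧ (∑ i, Q i) = 1 ∧
    (∑ i, Q i * Real.log (Q i / (1 / (n : ℝ)))) ≤ ρ ∧
    sSup {v : ℝ | ∃ q : Fin n → ℝ, (∀ i, 0 ≤ q i) ∧ (∑ i, q i) = 1 ∧
        (∑ i, q i * Real.log (q i / (1 / (n : ℝ)))) ≤ ρ ∧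
        v = ∑ i, q i * L i} = ∑ i, Q i * L i := by
  haveI : Nonempty (Fin n) := ⟨⟨0, hn⟩⟩
  have hn0 : (0:ℝ) < n := by exact_mod_cast Nat.lt_of_lt_of_le Nat.zero_lt_one hn
  set S : ℝ := ∑ j, Real.exp (ηstar * L j) with hSdef
  have hSpos : 0 < S := Finset.sum_pos (fun i _ => Real.exp_pos _) Finset.univ_nonempty
  set c : ℝ := Real.log ((1 / (n:ℝ)) * S) with hcdef
  have hQpos : ∀ i, 0 < Q i := fun i => by
    rw [hQ i]; exact div_pos (Real.exp_pos _) hSpos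
  have hQnn : ∀ i, 0 ≤ Q i := fun i => (hQpos i).le
  have hQsum : (∑ i, Q i) = 1 := by
    simp only [hQ]
    rw [← Finset.sum_div, ← hSdef, div_self hSpos.ne']
  have hlogQ : ∀ i, Real.log (Q i) = ηstar * L i - Real.log S := fun i => by
    rw [hQ i, Real.log_div (Real.exp_pos _).ne' hSpos.ne', Real.log_exp]
  have hc : c = Real.log S - Real.log n := by
    rw [hcdef, Real.log_mul (by positivity) hSpos.ne', one_div, Real.log_inv]; ring
  set A : ℝ := ∑ i, Q i * L i with hAdef
  have hKLQ : (∑ i, Q i * Real.log (Q i / (1 / (n:ℝ)))) = ηstar * A - c := by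
    have hterm : ∀ i, Q i * Real.log (Q i / (1 / (n:ℝ))) = Q i * (ηstar * L i) - Q i * c := by
      intro i
      rw [Real.log_div (hQpos i).ne' (by positivity), hlogQ i, Real.log_div one_ne_zero hn0.ne',
        Real.log_one, hc]
      ring
    rw [Finset.sum_congr rfl (fun i _ => hterm i), Finset.sum_sub_distrib, ← Finset.sum_mul,
      hQsum, one_mul]
    have h9 : ∑ x, Q x * (ηstar * L x) = ηstar * A := by
      rw [hAdef, Finset.mul_sum]
      exact Finset.sum_congr rfl fun i _ => by ring
    rw [h9]
  -- stationarity: ηstar * A = c + ρ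
  have hkey : ηstar * A = c + ρ := by
    set D : ℝ := ∑ i, Real.exp (ηstar * L i) * L i with hDdef
    have hS' : HasDerivAt (fun η => ∑ i, Real.exp (η * L i)) D ηstar := by
      have : ∀ i ∈ Finset.univ, HasDerivAt (fun η => Real.exp (η * L i))
          (Real.exp (ηstar * L i) * (1 * L i)) ηstar :=
        fun i _ => ((hasDerivAt_id ηstar).mul_const (L i)).exp
      simpa [hDdef] using HasDerivAt.fun_sum this
    have hC : HasDerivAt (fun η => Real.log ((1 / (n:ℝ)) * ∑ i, Real.exp (η * L i)))
        ((1 / (n:ℝ)) * D / ((1 / (n:ℝ)) * S)) ηstar :=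
      HasDerivAt.log (hS'.const_mul _) (by positivity)
    have hinv : HasDerivAt (fun η : ℝ => 1 / η) (-(ηstar ^ 2)⁻¹) ηstar := by
      simpa [one_div] using hasDerivAt_inv hηstar.ne'
    have hsum := (hinv.fun_mul hC).fun_add (hinv.const_mul ρ)
    have hfe : (fun η : ℝ => 1 / η * Real.log ((1 / (n:ℝ)) * ∑ i, Real.exp (η * L i)) + ρ / η)
        = (fun η : ℝ => 1 / η * Real.log ((1 / (n:ℝ)) * ∑ i, Real.exp (η * L i)) + ρ * (1 / η)) := by
      funext η; rw [mul_one_div]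
    rw [← hfe] at hsum
    have hloc : IsLocalMin (fun η => 1 / η * Real.log ((1 / (n:ℝ)) * ∑ i, Real.exp (η * L i))
        + ρ / η) ηstar := by
      filter_upwards [isOpen_Ioi.mem_nhds (Set.mem_Ioi.mpr hηstar)] with η hη
      exact hmin η hη
    have hzero := hloc.hasDerivAt_eq_zero hsum
    have hz : -(ηstar ^ 2)⁻¹ * c + 1 / ηstar * ((1 / (n:ℝ)) * D / ((1 / (n:ℝ)) * S)) +
        ρ * -(ηstar ^ 2)⁻¹ = 0 := hzero
    have hDS : (1 / (n:ℝ)) * D / ((1 / (n:ℝ)) * S) = D / S := by field_simp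
    rw [hDS] at hz
    have hAD : A = D / S := by
      rw [hAdef, hDdef, Finset.sum_div]
      exact Finset.sum_congr rfl fun i _ => by rw [hQ i]; ring
    rw [hAD]
    field_simp at hz ⊢
    have h8 : ηstar ^ 3 * (ηstar * D) = ηstar ^ 3 * ((c + ρ) * S) := by linear_combination ηstar ^ 3 * hz
    have h9 : ηstar * D = (c + ρ) * S := mul_left_cancel₀ (by positivity) h8
    linarith [h9]
  have hKLρ : (∑ i, Q i * Real.log (Q i / (1 / (n:ℝ)))) = ρ := by
    rw [hKLQ]; linarith
  -- upper bound: any feasible q has value ≤ A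
  have hub : ∀ q : Fin n → ℝ, (∀ i, 0 ≤ q i) → (∑ i, q i) = 1 →
      (∑ i, q i * Real.log (q i / (1 / (n:ℝ)))) ≤ ρ → (∑ i, q i * L i) ≤ A := by
    intro q hqnn hqsum hqkl
    have hgibbs : (∑ i, q i * Real.log (Q i / q i)) ≤ 0 := by
      have hterm : ∀ i ∈ Finset.univ, q i * Real.log (Q i / q i) ≤ Q i - q i := by
        intro i _
        rcases eq_or_lt_of_le (hqnn i) with h | h
        · simp [← h, hQnn i]
        · have hx : 0 < Q i / q i := div_pos (hQpos i) h
          calc q i * Real.log (Q i / q i) ≤ q i * (Q i / q i - 1) :=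
              mul_le_mul_of_nonneg_left (Real.log_le_sub_one_of_pos hx) h.le
            _ = Q i - q i := by field_simp
      calc (∑ i, q i * Real.log (Q i / q i)) ≤ ∑ i, (Q i - q i) := Finset.sum_le_sum hterm
        _ = 0 := by rw [Finset.sum_sub_distrib, hQsum, hqsum]; ring
    have hid : (∑ i, q i * Real.log (Q i / q i)) =
        ηstar * (∑ i, q i * L i) - c - (∑ i, q i * Real.log (q i / (1 / (n:ℝ)))) := by
      have hterm : ∀ i, q i * Real.log (Q i / q i) =
          q i * (ηstar * L i) - q i * c - q i * Real.log (q i / (1 / (n:ℝ))) := by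
        intro i
        rcases eq_or_lt_of_le (hqnn i) with h | h
        · simp [← h]
        · rw [Real.log_div (hQpos i).ne' h.ne', hlogQ i,
            Real.log_div h.ne' (by positivity : (1 / (n:ℝ)) ≠ 0),
            Real.log_div one_ne_zero hn0.ne', Real.log_one, hc]
          ring
      rw [Finset.sum_congr rfl (fun i _ => hterm i), Finset.sum_sub_distrib,
        Finset.sum_sub_distrib, ← Finset.sum_mul, hqsum, one_mul]
      have h9 : ∑ x, q x * (ηstar * L x) = ηstar * ∑ i, q i * L i := by
        rw [Finset.mul_sum]
        exact Finset.sum_congr rfl fun i _ => by ring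
      rw [h9]
    have h1 : ηstar * (∑ i, q i * L i) ≤ c + ρ := by
      rw [hid] at hgibbs; linarith
    rw [← hkey] at h1
    exact le_of_mul_le_mul_left h1 hηstar
  refine ⟨hQnn, hQsum, hKLρ.le, ?_⟩
  apply IsGreatest.csSup_eq
  constructor
  · exact ⟨Q, hQnn, hQsum, hKLρ.le, rfl⟩
  · rintro v ⟨q, hqnn, hqsum, hqkl, rfl⟩
    exact hub q hqnn hqsum hqkl
end

section
/- (χ²-robust upper bound.) Fix an integer n ≥ 1, real losses L_1, …, L_n, and a radius ρ ≥ 0. Let L̄ := (1/n) ∑_{i=1}^n L_i and σ := sqrt( (1/n) ∑_{i=1}^n (L_i − L̄)² ). Then for every probability vector q on {1,…,n} satisfying the χ² constraint (1/n) ∑_{i=1}^n ( n·q_i − 1 )² ≤ ρ, one has ∑_{i=1}^n q_i L_i ≤ L̄ + σ · sqrt(ρ). In particular, the χ²-robust value R_{χ²}(ρ) := sup { ∑_i q_i L_i : q a probability vector with (1/n) ∑_i (n q_i − 1)² ≤ ρ } satisfies R_{χ²}(ρ) ≤ L̄ + σ · sqrt(ρ). -/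
theorem chi2_key (n : ℕ) (hn : 1 ≤ n) (L : Fin n → ℝ) (ρ : ℝ) (hρ : 0 ≤ ρ)
    (q : Fin n → ℝ) (hq : ∀ i, 0 ≤ q i) (hq1 : (∑ i, q i) = 1)
    (hχ : (1 / (n : ℝ)) * (∑ i, ((n : ℝ) * q i - 1) ^ 2) ≤ ρ) :
    (∑ i, q i * L i) ≤
      (1 / (n : ℝ)) * (∑ i, L i) +
      Real.sqrt ((1 / (n : ℝ)) * ∑ i, (L i - (1 / (n : ℝ)) * (∑ j, L j)) ^ 2) *
        Real.sqrt ρ := by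
  have hn0 : (0 : ℝ) < (n : ℝ) := by exact_mod_cast hn
  set Lb : ℝ := (1 / (n : ℝ)) * (∑ i, L i) with hLb
  set σ2 : ℝ := (1 / (n : ℝ)) * ∑ i, (L i - Lb) ^ 2 with hσ2
  have hσ2nonneg : 0 ≤ σ2 := by
    apply mul_nonneg (by positivity)
    exact Finset.sum_nonneg fun i _ => sq_nonneg _
  -- centered sum identity
  have hab : ∑ i, (q i - 1 / (n : ℝ)) * (L i - Lb) = (∑ i, q i * L i) - Lb := by
    have hexp : ∀ i ∈ Finset.univ, (q i - 1 / (n : ℝ)) * (L i - Lb)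
        = q i * L i - Lb * q i - (1 / (n : ℝ)) * L i + (1 / (n : ℝ)) * Lb := by
      intro i _; ring
    rw [Finset.sum_congr rfl hexp]
    rw [Finset.sum_add_distrib, Finset.sum_sub_distrib, Finset.sum_sub_distrib,
      ← Finset.mul_sum, ← Finset.mul_sum, hq1, Finset.sum_const, Finset.card_univ,
      Fintype.card_fin, nsmul_eq_mul]
    rw [hLb]
    field_simp
    ring
  -- Cauchy-Schwarz
  have hcs := Finset.sum_mul_sq_le_sq_mul_sq Finset.univ
    (fun i => q i - 1 / (n : ℝ)) (fun i => L i - Lb)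
  have ha2 : (∑ i, (q i - 1 / (n : ℝ)) ^ 2)
      = (1 / (n : ℝ)) * ((1 / (n : ℝ)) * (∑ i, ((n : ℝ) * q i - 1) ^ 2)) := by
    rw [Finset.mul_sum, Finset.mul_sum]
    refine Finset.sum_congr rfl fun i _ => ?_
    field_simp
  have hb2 : (∑ i, (L i - Lb) ^ 2) = (n : ℝ) * σ2 := by
    rw [hσ2]; field_simp
  have hbound : (∑ i, (q i - 1 / (n : ℝ)) * (L i - Lb)) ^ 2 ≤ σ2 * ρ := by
    calc (∑ i, (q i - 1 / (n : ℝ)) * (L i - Lb)) ^ 2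
        ≤ (∑ i, (q i - 1 / (n : ℝ)) ^ 2) * (∑ i, (L i - Lb) ^ 2) := hcs
      _ = ((1 / (n : ℝ)) * (∑ i, ((n : ℝ) * q i - 1) ^ 2)) * σ2 := by
          rw [ha2, hb2]; field_simp
      _ ≤ ρ * σ2 := by
          apply mul_le_mul_of_nonneg_right hχ hσ2nonneg
      _ = σ2 * ρ := by ring
  have hfinal : ∑ i, (q i - 1 / (n : ℝ)) * (L i - Lb) ≤ Real.sqrt σ2 * Real.sqrt ρ := by
    rw [← Real.sqrt_mul hσ2nonneg]
    calc ∑ i, (q i - 1 / (n : ℝ)) * (L i - Lb)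
        ≤ |∑ i, (q i - 1 / (n : ℝ)) * (L i - Lb)| := le_abs_self _
      _ = Real.sqrt ((∑ i, (q i - 1 / (n : ℝ)) * (L i - Lb)) ^ 2) := (Real.sqrt_sq_eq_abs _).symm
      _ ≤ Real.sqrt (σ2 * ρ) := Real.sqrt_le_sqrt hbound
  linarith [hfinal, hab.symm.le, hab.le]

/-- χ²-robust upper bound: every probability vector in the Pearson
χ² ball of radius ρ around the uniform distribution satisfies
`∑ q_i L_i ≤ L̄ + σ√ρ`; consequently the χ²-robust value is at most `L̄ + σ√ρ`. -/
theorem chi2_robust_upper_bound (n : ℕ) (hn : 1 ≤ n) (L : Fin n → ℝ) (ρ : ℝ)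
    (hρ : 0 ≤ ρ) :
    (∀ q : Fin n → ℝ, (∀ i, 0 ≤ q i) → (∑ i, q i) = 1 →
      (1 / (n : ℝ)) * (∑ i, ((n : ℝ) * q i - 1) ^ 2) ≤ ρ →
      (∑ i, q i * L i) ≤
        (1 / (n : ℝ)) * (∑ i, L i) +
        Real.sqrt ((1 / (n : ℝ)) * ∑ i, (L i - (1 / (n : ℝ)) * (∑ j, L j)) ^ 2) *
          Real.sqrt ρ) ∧
    sSup {v : ℝ | ∃ q : Fin n → ℝ, (∀ i, 0 ≤ q i) ∧ (∑ i, q i) = 1 ∧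
        (1 / (n : ℝ)) * (∑ i, ((n : ℝ) * q i - 1) ^ 2) ≤ ρ ∧
        v = ∑ i, q i * L i} ≤
      (1 / (n : ℝ)) * (∑ i, L i) +
      Real.sqrt ((1 / (n : ℝ)) * ∑ i, (L i - (1 / (n : ℝ)) * (∑ j, L j)) ^ 2) *
        Real.sqrt ρ := by
  have hn0 : (0 : ℝ) < (n : ℝ) := by exact_mod_cast hn
  refine ⟨fun q hq hq1 hχ => chi2_key n hn L ρ hρ q hq hq1 hχ, ?_⟩
  apply csSup_le
  · refine ⟨∑ i, (1 / (n : ℝ)) * L i, fun _ => 1 / (n : ℝ), fun i => by positivity, ?_, ?_, rfl⟩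
    · rw [Finset.sum_const, Finset.card_univ, Fintype.card_fin, nsmul_eq_mul]
      field_simp
    · have h0 : (n : ℝ) * (1 / (n : ℝ)) - 1 = 0 := by field_simp; ring
      simpa [h0, mul_inv_cancel₀ hn0.ne'] using hρ
  · rintro v ⟨q, hq, hq1, hχ, rfl⟩
    exact chi2_key n hn L ρ hρ q hq hq1 hχ
end

section
/- (χ²-robust bound: tightness under the nonnegativity condition.) Fix an integer n ≥ 1, real losses L_1, …, L_n, and ρ ≥ 0. Let L̄ := (1/n) ∑_{i=1}^n L_i, z_i := L_i − L̄, and σ := sqrt( (1/n) ∑_{i=1}^n z_i² ). Assume σ > 0 and that 1 + sqrt(ρ) · z_i / σ ≥ 0 for every i ∈ {1,…,n}. Then sup { ∑_{i=1}^n q_i L_i : q a probability vector on {1,…,n} with (1/n) ∑_{i=1}^n (n q_i − 1)² ≤ ρ } = L̄ + σ · sqrt(ρ). -/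
/-- tightness of the χ²-robust bound under the nonnegativity
condition: if `σ > 0` and `1 + √ρ · z_i/σ ≥ 0` for all `i`, then the χ²-robust
value equals `L̄ + σ√ρ`. -/
theorem chi2_robust_bound_tight (n : ℕ) (hn : 1 ≤ n) (L : Fin n → ℝ) (ρ : ℝ)
    (hρ : 0 ≤ ρ) (Lbar σ : ℝ)
    (hLbar : Lbar = (1 / (n : ℝ)) * ∑ i, L i)
    (hσ : σ = Real.sqrt ((1 / (n : ℝ)) * ∑ i, (L i - Lbar) ^ 2))
    (hσ_pos : 0 < σ)
    (hnonneg : ∀ i, 0 ≤ 1 + Real.sqrt ρ * (L i - Lbar) / σ) :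
    sSup {v : ℝ | ∃ q : Fin n → ℝ, (∀ i, 0 ≤ q i) ∧ (∑ i, q i) = 1 ∧
        (1 / (n : ℝ)) * (∑ i, ((n : ℝ) * q i - 1) ^ 2) ≤ ρ ∧
        v = ∑ i, q i * L i} =
      Lbar + σ * Real.sqrt ρ := by
  have hn0 : (0:ℝ) < n := by exact_mod_cast Nat.lt_of_lt_of_le Nat.zero_lt_one hn
  have hn0' : (n:ℝ) ≠ 0 := ne_of_gt hn0
  set z : Fin n → ℝ := fun i => L i - Lbar with hz
  have hzsum : ∑ i, z i = 0 := by
    simp only [hz, Finset.sum_sub_distrib, Finset.sum_const, Finset.card_univ,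
      Fintype.card_fin, nsmul_eq_mul]
    rw [hLbar]
    field_simp
    ring
  have hVnn : 0 ≤ (1 / (n : ℝ)) * ∑ i, z i ^ 2 := by
    positivity
  have hσ2 : σ ^ 2 = (1 / (n : ℝ)) * ∑ i, z i ^ 2 := by
    rw [hσ]; exact Real.sq_sqrt hVnn
  have hzsq : ∑ i, z i ^ 2 = n * σ ^ 2 := by
    rw [hσ2]; field_simp
  have hρsq : Real.sqrt ρ ^ 2 = ρ := Real.sq_sqrt hρ
  -- Value decomposition for any probability vector q
  have hval : ∀ q : Fin n → ℝ, (∑ i, q i) = 1 →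
      ∑ i, q i * L i = Lbar + (1 / (n:ℝ)) * ∑ i, ((n:ℝ) * q i - 1) * z i := by
    intro q hq1
    have h1 : ∑ i, q i * L i = Lbar * (∑ i, q i) + ∑ i, q i * z i := by
      rw [Finset.mul_sum, ← Finset.sum_add_distrib]
      apply Finset.sum_congr rfl; intro i _; simp only [hz]; ring
    have h2 : ∑ i, ((n:ℝ) * q i - 1) * z i = (n:ℝ) * (∑ i, q i * z i) - ∑ i, z i := by
      rw [Finset.mul_sum, ← Finset.sum_sub_distrib]
      apply Finset.sum_congr rfl; intro i _; ring
    rw [h1, hq1, h2, hzsum]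
    field_simp
    ring
  set S : Set ℝ := {v : ℝ | ∃ q : Fin n → ℝ, (∀ i, 0 ≤ q i) ∧ (∑ i, q i) = 1 ∧
      (1 / (n : ℝ)) * (∑ i, ((n : ℝ) * q i - 1) ^ 2) ≤ ρ ∧
      v = ∑ i, q i * L i} with hS
  -- the witness
  set q0 : Fin n → ℝ := fun i => (1 + Real.sqrt ρ * z i / σ) / n with hq0
  have hq0sum : ∑ i, q0 i = 1 := by
    simp only [hq0]
    rw [← Finset.sum_div]
    rw [Finset.sum_add_distrib]
    simp only [Finset.sum_const, Finset.card_univ, Fintype.card_fin, nsmul_eq_mul, mul_one]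
    have : ∑ i, Real.sqrt ρ * z i / σ = (Real.sqrt ρ / σ) * ∑ i, z i := by
      rw [Finset.mul_sum]; apply Finset.sum_congr rfl; intro i _; ring
    rw [this, hzsum]
    field_simp
    ring
  have hq0lin : ∀ i, (n:ℝ) * q0 i - 1 = Real.sqrt ρ * z i / σ := by
    intro i; simp only [hq0]; field_simp; ring
  have hmem : Lbar + σ * Real.sqrt ρ ∈ S := by
    refine ⟨q0, fun i => ?_, hq0sum, ?_, ?_⟩
    · simp only [hq0]
      exact div_nonneg (hnonneg i) (le_of_lt hn0)
    · have : ∑ i, ((n:ℝ) * q0 i - 1) ^ 2 = (ρ / σ ^ 2) * ∑ i, z i ^ 2 := by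
        rw [Finset.mul_sum]
        apply Finset.sum_congr rfl; intro i _
        rw [hq0lin i, div_pow, mul_pow, hρsq]
        ring
      rw [this, hzsq]
      have hσ0 : σ ≠ 0 := ne_of_gt hσ_pos
      field_simp
      exact le_rfl
    · rw [hval q0 hq0sum]
      have : ∑ i, ((n:ℝ) * q0 i - 1) * z i = (Real.sqrt ρ / σ) * ∑ i, z i ^ 2 := by
        rw [Finset.mul_sum]
        apply Finset.sum_congr rfl; intro i _
        rw [hq0lin i]; ring
      rw [this, hzsq]
      have hσ0 : σ ≠ 0 := ne_of_gt hσ_pos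
      field_simp
  -- upper bound
  have hub : ∀ v ∈ S, v ≤ Lbar + σ * Real.sqrt ρ := by
    rintro v ⟨q, hqnn, hq1, hconstr, rfl⟩
    rw [hval q hq1]
    have hCS : (∑ i, ((n:ℝ) * q i - 1) * z i) ^ 2 ≤
        (∑ i, ((n:ℝ) * q i - 1) ^ 2) * ∑ i, z i ^ 2 :=
      Finset.sum_mul_sq_le_sq_mul_sq _ _ _
    have h1 : ∑ i, ((n:ℝ) * q i - 1) ^ 2 ≤ n * ρ := by
      have := hconstr
      rw [div_mul_eq_mul_div, one_mul, div_le_iff₀ hn0] at this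
      linarith
    have h2 : (∑ i, ((n:ℝ) * q i - 1) * z i) ^ 2 ≤ ((n:ℝ) * σ * Real.sqrt ρ) ^ 2 := by
      calc (∑ i, ((n:ℝ) * q i - 1) * z i) ^ 2
          ≤ (∑ i, ((n:ℝ) * q i - 1) ^ 2) * ∑ i, z i ^ 2 := hCS
        _ ≤ (n * ρ) * (n * σ ^ 2) := by
            rw [hzsq]
            apply mul_le_mul_of_nonneg_right h1
            positivity
        _ = ((n:ℝ) * σ * Real.sqrt ρ) ^ 2 := by rw [mul_pow, mul_pow, hρsq]; ring
    have h3 : ∑ i, ((n:ℝ) * q i - 1) * z i ≤ (n:ℝ) * σ * Real.sqrt ρ := by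
      have hnng : 0 ≤ (n:ℝ) * σ * Real.sqrt ρ := by positivity
      nlinarith [h2]
    have : (1 / (n:ℝ)) * ∑ i, ((n:ℝ) * q i - 1) * z i ≤ σ * Real.sqrt ρ := by
      rw [div_mul_eq_mul_div, one_mul, div_le_iff₀ hn0]
      linarith
    linarith
  exact le_antisymm (csSup_le ⟨_, hmem⟩ hub) (le_csSup ⟨_, hub⟩ hmem)
end
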